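/- arXiv:2204.14151 — 2 statements merged into one kernel-verified Lean document; each statement's English description precedes it below -/
import Mathlib

section
/- For n sufficiently large and any x ∈ ℝ, the sum Σ_{ℓ∈N(n)} (1 + |2^ℓ x − 2^{2n+2ℓ}|)^{−M} is bounded by a constant C independent of n and x, where M ≥ 2 and N(n) = {k ∈ ℕ : n/4 ≤ k ≤ n/2}. -/
/-- for `M ≥ 2` and `n` sufficiently large, the sum
`Σ_{ℓ ∈ N(n)} (1 + |2^ℓ x - 2^(2n+2ℓ)|)^(-M)` is bounded by a constant `C`
independent of `n` and `x`, where `N(n) = {k : n/4 ≤ k ≤ n/2}`. -/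
theorem stmt2 (M : ℝ) (hM : 2 ≤ M) :
    ∃ C > (0 : ℝ), ∃ N : ℕ, ∀ n : ℕ, N ≤ n → ∀ x : ℝ,
      ∑ ℓ ∈ Finset.Icc (n / 4) (n / 2),
          (1 + |(2 : ℝ) ^ ℓ * x - 2 ^ (2 * n + 2 * ℓ)|) ^ (-M) ≤ C := by
  classical
  refine ⟨3, by norm_num, 1, fun n hn x => ?_⟩
  set P : ℕ → Prop := fun ℓ => |x - 2 ^ (2 * n + ℓ)| ≤ 2 ^ (2 * n + ℓ) / 4 with hP
  -- factorization of the argument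
  have hfact : ∀ ℓ : ℕ, |(2 : ℝ) ^ ℓ * x - 2 ^ (2 * n + 2 * ℓ)|
      = 2 ^ ℓ * |x - 2 ^ (2 * n + ℓ)| := by
    intro ℓ
    have : (2 : ℝ) ^ ℓ * x - 2 ^ (2 * n + 2 * ℓ) = 2 ^ ℓ * (x - 2 ^ (2 * n + ℓ)) := by
      have h2 : (2 : ℝ) ^ (2 * n + 2 * ℓ) = 2 ^ ℓ * 2 ^ (2 * n + ℓ) := by
        rw [← pow_add]; ring_nf
      rw [h2]; ring
    rw [this, abs_mul, abs_of_nonneg (by positivity : (0:ℝ) ≤ 2 ^ ℓ)]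
  -- each term is at most 1
  have hone : ∀ ℓ : ℕ, (1 + |(2 : ℝ) ^ ℓ * x - 2 ^ (2 * n + 2 * ℓ)|) ^ (-M) ≤ 1 := by
    intro ℓ
    exact Real.rpow_le_one_of_one_le_of_nonpos
      (le_add_of_nonneg_right (abs_nonneg _)) (by linarith)
  -- far terms are geometrically small
  have hfar : ∀ ℓ : ℕ, ¬ P ℓ →
      (1 + |(2 : ℝ) ^ ℓ * x - 2 ^ (2 * n + 2 * ℓ)|) ^ (-M) ≤ (1/4 : ℝ) ^ ℓ := by
    intro ℓ hPl
    simp only [hP, not_le] at hPl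
    have hbig : (2 : ℝ) ^ ℓ ≤ 1 + |(2 : ℝ) ^ ℓ * x - 2 ^ (2 * n + 2 * ℓ)| := by
      rw [hfact]
      have h1 : (2 : ℝ) ^ (2 * n + ℓ) / 4 ≤ |x - 2 ^ (2 * n + ℓ)| := hPl.le
      have h2 : (2 : ℝ) ^ ℓ ≤ 2 ^ ℓ * (2 ^ (2 * n + ℓ) / 4) := by
        have : (4 : ℝ) ≤ 2 ^ (2 * n + ℓ) := by
          calc (4:ℝ) = 2 ^ 2 := by norm_num
          _ ≤ 2 ^ (2 * n + ℓ) := by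
            apply pow_le_pow_right₀ (by norm_num)
            omega
        nlinarith [pow_pos (by norm_num : (0:ℝ) < 2) ℓ]
      nlinarith [pow_pos (by norm_num : (0:ℝ) < 2) ℓ, abs_nonneg (x - (2:ℝ) ^ (2*n+ℓ))]
    calc (1 + |(2 : ℝ) ^ ℓ * x - 2 ^ (2 * n + 2 * ℓ)|) ^ (-M)
        ≤ ((2:ℝ) ^ ℓ) ^ (-M) :=
          Real.rpow_le_rpow_of_nonpos (by positivity) hbig (by linarith)
      _ ≤ ((2:ℝ) ^ ℓ) ^ (-2 : ℝ) :=
          Real.rpow_le_rpow_of_exponent_le (one_le_pow₀ one_le_two) (by linarith)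
      _ = (1/4 : ℝ) ^ ℓ := by
          rw [← Real.rpow_natCast (2:ℝ) ℓ, ← Real.rpow_mul (by norm_num),
            ← Real.rpow_natCast (1/4 : ℝ) ℓ]
          rw [show (1/4 : ℝ) = (2:ℝ) ^ (-2 : ℝ) by
            rw [Real.rpow_neg (by norm_num), show ((2:ℝ) ^ (2:ℝ)) = 4 by
              rw [show (2:ℝ) = ((2:ℕ):ℝ) by norm_num, Real.rpow_natCast]; norm_num]
            norm_num]
          rw [← Real.rpow_mul (by norm_num)]
          ring_nf
    -- at most one ℓ satisfies P
  have huniq : ∀ ℓ ∈ Finset.Icc (n/4) (n/2), ∀ ℓ' ∈ Finset.Icc (n/4) (n/2),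
      P ℓ → P ℓ' → ℓ = ℓ' := by
    have key : ∀ ℓ ℓ' : ℕ, ℓ < ℓ' → P ℓ → P ℓ' → False := by
      intro ℓ ℓ' hlt h1 h2
      rw [hP] at h1 h2
      have e1 := abs_le.mp h1
      have e2 := abs_le.mp h2
      have hx1 : x ≤ 5 / 4 * 2 ^ (2 * n + ℓ) := by linarith [e1.2]
      have hx2 : 3 / 4 * (2:ℝ) ^ (2 * n + ℓ') ≤ x := by linarith [e2.1]
      have hpow : (2:ℝ) * 2 ^ (2 * n + ℓ) ≤ 2 ^ (2 * n + ℓ') := by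
        calc (2:ℝ) * 2 ^ (2 * n + ℓ) = 2 ^ (2 * n + ℓ + 1) := by ring
        _ ≤ 2 ^ (2 * n + ℓ') := pow_le_pow_right₀ one_le_two (by omega)
      nlinarith [pow_pos (by norm_num : (0:ℝ) < 2) (2 * n + ℓ)]
    intro ℓ _ ℓ' _ h1 h2
    rcases lt_trichotomy ℓ ℓ' with h | h | h
    · exact absurd (key ℓ ℓ' h h1 h2) (not_false)
    · exact h
    · exact absurd (key ℓ' ℓ h h2 h1) (not_false)
  calc ∑ ℓ ∈ Finset.Icc (n / 4) (n / 2),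
        (1 + |(2 : ℝ) ^ ℓ * x - 2 ^ (2 * n + 2 * ℓ)|) ^ (-M)
      ≤ ∑ ℓ ∈ Finset.Icc (n / 4) (n / 2),
        ((1/4 : ℝ) ^ ℓ + if P ℓ then 1 else 0) := by
        apply Finset.sum_le_sum
        intro ℓ _
        by_cases h : P ℓ
        · simp only [h, if_pos]
          have : (0:ℝ) ≤ (1/4:ℝ)^ℓ := by positivity
          linarith [hone ℓ]
        · simp only [h, if_neg, not_false_iff, add_zero]
          exact hfar ℓ h
    _ = (∑ ℓ ∈ Finset.Icc (n / 4) (n / 2), (1/4 : ℝ) ^ ℓ)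
        + ∑ ℓ ∈ Finset.Icc (n / 4) (n / 2), (if P ℓ then (1:ℝ) else 0) :=
        Finset.sum_add_distrib
    _ ≤ (4/3 : ℝ) + 1 := by
        gcongr
        · calc ∑ ℓ ∈ Finset.Icc (n / 4) (n / 2), (1/4 : ℝ) ^ ℓ
              ≤ ∑' ℓ : ℕ, (1/4 : ℝ) ^ ℓ :=
                Summable.sum_le_tsum _ (fun _ _ => by positivity)
                  (summable_geometric_of_lt_one (by norm_num) (by norm_num))
            _ = (4/3 : ℝ) := by
                rw [tsum_geometric_of_lt_one (by norm_num) (by norm_num)]; norm_num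
        · rw [Finset.sum_boole]
          have : ((Finset.Icc (n / 4) (n / 2)).filter P).card ≤ 1 := by
            apply Finset.card_le_one.mpr
            intro a ha b hb
            simp only [Finset.mem_filter] at ha hb
            exact huniq a ha.1 b hb.1 ha.2 hb.2
          exact_mod_cast this
    _ ≤ 3 := by norm_num
end

section
/- For any large n and j ∈ N(n) = {k : n/4 ≤ k ≤ n/2}, with M ≥ 100 and n sufficiently large, the quantity 2ʲ ∫_ℝ (1+2ʲ|x−y|)^{−M} (1+2^ℓ|y−2^{2n+ℓ}|)^{−2M} dy, taken over ℓ ∈ N(n), ℓ ≠ j, and x with 2ʲ|x−2^{2n+j}| ≤ 1, is bounded by C·2ʲ·2^{−2nM} ≤ C·2^{n/2}·2^{−nM}. -/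
open MeasureTheory Real Filter

/-- The standard integrable kernel `(1+|u|)^(-M)` on `ℝ`. -/
lemma stmt17_aux_integrable {M : ℝ} (hM : (1 : ℝ) < M) :
    Integrable (fun u : ℝ => (1 + |u|) ^ (-M)) := by
  have h := integrable_one_add_norm (E := ℝ) (μ := volume) (r := M)
    (by simpa using hM)
  simpa [Real.norm_eq_abs] using h

set_option maxHeartbeats 1000000 in
/-- the kernel interaction estimate. For `M ≥ 100`, `n` large,
`j ≠ ℓ` in `N(n) = {k : n/4 ≤ k ≤ n/2}` and `x` with `2^j |x - 2^(2n+j)| ≤ 1`,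
the quantity `2^j ∫ (1+2^j|x-y|)^(-M) (1+2^ℓ|y-2^(2n+ℓ)|)^(-2M) dy` is bounded by
`C 2^j 2^(-2nM) ≤ C 2^(n/2) 2^(-nM)`. -/
theorem stmt17 (M : ℝ) (hM : 100 ≤ M) :
    ∃ C > (0 : ℝ), ∃ N : ℕ, ∀ n : ℕ, N ≤ n →
      ∀ j ℓ : ℕ, n / 4 ≤ j → j ≤ n / 2 → n / 4 ≤ ℓ → ℓ ≤ n / 2 → j ≠ ℓ →
        ∀ x : ℝ, (2 : ℝ) ^ j * |x - 2 ^ (2 * n + j)| ≤ 1 →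
          ((2 : ℝ) ^ j *
              ∫ y : ℝ, (1 + 2 ^ j * |x - y|) ^ (-M) *
                (1 + 2 ^ ℓ * |y - 2 ^ (2 * n + ℓ)|) ^ (-(2 * M))
            ≤ C * 2 ^ j * (2 : ℝ) ^ (-(2 * (n : ℝ) * M))) ∧
          C * (2 : ℝ) ^ j * (2 : ℝ) ^ (-(2 * (n : ℝ) * M))
            ≤ C * (2 : ℝ) ^ ((n : ℝ) / 2) * (2 : ℝ) ^ (-((n : ℝ) * M)) := by
  have hM1 : (1 : ℝ) < M := by linarith
  have hG : Integrable (fun u : ℝ => (1 + |u|) ^ (-M)) := stmt17_aux_integrable hM1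
  set K : ℝ := ∫ u : ℝ, (1 + |u|) ^ (-M) with hK
  have hKnn : 0 ≤ K := integral_nonneg fun u => rpow_nonneg (by positivity) _
  refine ⟨(2 : ℝ) ^ M * (2 * K + 1), by positivity, 4, ?_⟩
  intro n hn j ℓ hj1 hj2 hl1 hl2 hjl x hx
  have hn1 : 1 ≤ n := by omega
  have hj0 : 1 ≤ j := by omega
  have hl0 : 1 ≤ ℓ := by omega
  have h2j : (1 : ℝ) ≤ 2 ^ j := one_le_pow₀ one_le_two
  have h2l : (1 : ℝ) ≤ 2 ^ ℓ := one_le_pow₀ one_le_two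
  -- distance from x to the center 2^(2n+j)
  have hxj : |x - 2 ^ (2 * n + j)| ≤ 1 := by
    nlinarith [abs_nonneg (x - (2 : ℝ) ^ (2 * n + j))]
  -- separation of centers
  have hgap : (2 : ℝ) ^ (2 * n) ≤ |(2 : ℝ) ^ (2 * n + j) - 2 ^ (2 * n + ℓ)| := by
    rcases lt_or_gt_of_ne hjl with h | h
    · have h1 : (2 : ℝ) ^ (2 * n + j) * 2 ≤ 2 ^ (2 * n + ℓ) := by
        rw [show (2 : ℝ) ^ (2 * n + j) * 2 = 2 ^ (2 * n + j + 1) by ring]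
        exact pow_le_pow_right₀ one_le_two (by omega)
      have h2 : (2 : ℝ) ^ (2 * n) ≤ 2 ^ (2 * n + j) :=
        pow_le_pow_right₀ one_le_two (by omega)
      have hp : (0:ℝ) < 2 ^ (2 * n + j) := by positivity
      rw [abs_sub_comm, abs_of_nonneg (by linarith)]
      linarith
    · have h1 : (2 : ℝ) ^ (2 * n + ℓ) * 2 ≤ 2 ^ (2 * n + j) := by
        rw [show (2 : ℝ) ^ (2 * n + ℓ) * 2 = 2 ^ (2 * n + ℓ + 1) by ring]
        exact pow_le_pow_right₀ one_le_two (by omega)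
      have h2 : (2 : ℝ) ^ (2 * n) ≤ 2 ^ (2 * n + ℓ) :=
        pow_le_pow_right₀ one_le_two (by omega)
      have hp : (0:ℝ) < 2 ^ (2 * n + ℓ) := by positivity
      rw [abs_of_nonneg (by linarith)]
      linarith
  have hxl : (2 : ℝ) ^ (2 * n) - 1 ≤ |x - 2 ^ (2 * n + ℓ)| := by
    have := abs_sub_abs_le_abs_sub ((2 : ℝ) ^ (2 * n + j) - 2 ^ (2 * n + ℓ))
      ((2 : ℝ) ^ (2 * n + j) - x)
    have h3 : |(2:ℝ) ^ (2 * n + j) - x| = |x - 2 ^ (2 * n + j)| := abs_sub_comm _ _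
    have h4 : (2:ℝ) ^ (2 * n + j) - 2 ^ (2 * n + ℓ) - (2 ^ (2 * n + j) - x)
        = x - 2 ^ (2 * n + ℓ) := by ring
    rw [h4, h3] at this
    linarith
  set T : ℝ := 2 ^ (2 * n) / 2 with hT
  have h2n2 : (2 : ℝ) ≤ 2 ^ (2 * n) := by
    calc (2:ℝ) = 2^1 := (pow_one 2).symm
    _ ≤ 2 ^ (2*n) := pow_le_pow_right₀ one_le_two (by omega)
  have hT1 : (1 : ℝ) ≤ T := by rw [hT]; linarith
  have hT0 : (0 : ℝ) < T := by linarith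
  -- pointwise bound
  have key : ∀ y : ℝ,
      (1 + 2 ^ j * |x - y|) ^ (-M) * (1 + 2 ^ ℓ * |y - 2 ^ (2 * n + ℓ)|) ^ (-(2 * M))
        ≤ T ^ (-M) * ((1 + |y - x|) ^ (-M) + (1 + |y - 2 ^ (2 * n + ℓ)|) ^ (-M)) := by
    intro y
    set a : ℝ := 1 + 2 ^ j * |x - y| with ha
    set b : ℝ := 1 + 2 ^ ℓ * |y - 2 ^ (2 * n + ℓ)| with hb
    have ha1 : 1 ≤ a := by
      have := abs_nonneg (x - y); nlinarith
    have hb1 : 1 ≤ b := by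
      have := abs_nonneg (y - (2:ℝ) ^ (2 * n + ℓ)); nlinarith
    have htri : (2 : ℝ) ^ (2 * n) - 1 ≤ |x - y| + |y - 2 ^ (2 * n + ℓ)| := by
      calc (2 : ℝ) ^ (2 * n) - 1 ≤ |x - 2 ^ (2 * n + ℓ)| := hxl
      _ ≤ |x - y| + |y - 2 ^ (2 * n + ℓ)| := abs_sub_le _ _ _
    have hmax : T ≤ a ∨ T ≤ b := by
      rcases le_total (|x - y|) (|y - 2 ^ (2 * n + ℓ)|) with h | h
      · right
        have h5 : ((2:ℝ) ^ (2*n) - 1)/2 ≤ |y - 2 ^ (2 * n + ℓ)| := by linarith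
        have h6 : |y - (2:ℝ) ^ (2 * n + ℓ)| ≤ 2 ^ ℓ * |y - 2 ^ (2 * n + ℓ)| := by
          nlinarith [abs_nonneg (y - (2:ℝ) ^ (2 * n + ℓ))]
        rw [hb, hT]; linarith
      · left
        have h5 : ((2:ℝ) ^ (2*n) - 1)/2 ≤ |x - y| := by linarith
        have h6 : |x - y| ≤ 2 ^ j * |x - y| := by
          nlinarith [abs_nonneg (x - y)]
        rw [ha, hT]; linarith
    have hg1 : (0:ℝ) ≤ (1 + |y - x|) ^ (-M) := rpow_nonneg (by positivity) _
    have hg2 : (0:ℝ) ≤ (1 + |y - 2 ^ (2 * n + ℓ)|) ^ (-M) := rpow_nonneg (by positivity) _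
    have hTM : (0:ℝ) ≤ T ^ (-M) := rpow_nonneg hT0.le _
    rcases hmax with h | h
    · have e1 : a ^ (-M) ≤ T ^ (-M) :=
        rpow_le_rpow_of_nonpos hT0 h (by linarith)
      have e2 : b ^ (-(2*M)) ≤ (1 + |y - 2 ^ (2 * n + ℓ)|) ^ (-M) := by
        calc b ^ (-(2*M)) ≤ b ^ (-M) :=
              rpow_le_rpow_of_exponent_le hb1 (by linarith)
        _ ≤ (1 + |y - 2 ^ (2 * n + ℓ)|) ^ (-M) := by
              apply rpow_le_rpow_of_nonpos (by positivity) ?_ (by linarith)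
              rw [hb]
              nlinarith [abs_nonneg (y - (2:ℝ) ^ (2 * n + ℓ))]
      calc a ^ (-M) * b ^ (-(2*M)) ≤ T ^ (-M) * (1 + |y - 2 ^ (2 * n + ℓ)|) ^ (-M) :=
            mul_le_mul e1 e2 (rpow_nonneg (by linarith) _) hTM
      _ ≤ T ^ (-M) * ((1 + |y - x|) ^ (-M) + (1 + |y - 2 ^ (2 * n + ℓ)|) ^ (-M)) :=
            mul_le_mul_of_nonneg_left (by linarith) hTM
    · have e1 : b ^ (-(2*M)) ≤ T ^ (-M) := by
        calc b ^ (-(2*M)) ≤ b ^ (-M) :=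
              rpow_le_rpow_of_exponent_le hb1 (by linarith)
        _ ≤ T ^ (-M) := rpow_le_rpow_of_nonpos hT0 h (by linarith)
      have e2 : a ^ (-M) ≤ (1 + |y - x|) ^ (-M) := by
        apply rpow_le_rpow_of_nonpos (by positivity) ?_ (by linarith)
        rw [ha, abs_sub_comm x y]
        nlinarith [abs_nonneg (y - x)]
      calc a ^ (-M) * b ^ (-(2*M)) ≤ (1 + |y - x|) ^ (-M) * T ^ (-M) :=
            mul_le_mul e2 e1 (rpow_nonneg (by linarith) _) hg1
      _ = T ^ (-M) * (1 + |y - x|) ^ (-M) := by ring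
      _ ≤ T ^ (-M) * ((1 + |y - x|) ^ (-M) + (1 + |y - 2 ^ (2 * n + ℓ)|) ^ (-M)) :=
            mul_le_mul_of_nonneg_left (by linarith) hTM
  -- integrability of the dominating function
  have hG1 : Integrable (fun y : ℝ => (1 + |y - x|) ^ (-M)) := hG.comp_sub_right x
  have hG2 : Integrable (fun y : ℝ => (1 + |y - (2:ℝ) ^ (2 * n + ℓ)|) ^ (-M)) :=
    hG.comp_sub_right _
  have hdom : Integrable (fun y : ℝ =>
      T ^ (-M) * ((1 + |y - x|) ^ (-M) + (1 + |y - (2:ℝ) ^ (2 * n + ℓ)|) ^ (-M))) :=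
    (hG1.add hG2).const_mul _
  -- bound the integral
  have hint : (∫ y : ℝ, (1 + 2 ^ j * |x - y|) ^ (-M) *
        (1 + 2 ^ ℓ * |y - 2 ^ (2 * n + ℓ)|) ^ (-(2 * M)))
      ≤ T ^ (-M) * (2 * K) := by
    have step1 : (∫ y : ℝ, (1 + 2 ^ j * |x - y|) ^ (-M) *
          (1 + 2 ^ ℓ * |y - 2 ^ (2 * n + ℓ)|) ^ (-(2 * M)))
        ≤ ∫ y : ℝ, T ^ (-M) *
            ((1 + |y - x|) ^ (-M) + (1 + |y - (2:ℝ) ^ (2 * n + ℓ)|) ^ (-M)) := by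
      apply integral_mono_of_nonneg
      · exact Eventually.of_forall fun y => by positivity
      · exact hdom
      · exact Eventually.of_forall key
    have step2 : (∫ y : ℝ, T ^ (-M) *
          ((1 + |y - x|) ^ (-M) + (1 + |y - (2:ℝ) ^ (2 * n + ℓ)|) ^ (-M)))
        = T ^ (-M) * (2 * K) := by
      rw [integral_const_mul, integral_add hG1 hG2]
      have e1 : (∫ y : ℝ, (1 + |y - x|) ^ (-M)) = K :=
        integral_sub_right_eq_self (fun u : ℝ => (1 + |u|) ^ (-M)) x
      have e2 : (∫ y : ℝ, (1 + |y - (2:ℝ) ^ (2 * n + ℓ)|) ^ (-M)) = K :=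
        integral_sub_right_eq_self (fun u : ℝ => (1 + |u|) ^ (-M)) _
      rw [e1, e2]; ring
    linarith [step1, step2.le]
  -- identify T^(-M)
  have hTid : T ^ (-M) = 2 ^ M * (2 : ℝ) ^ (-(2 * (n : ℝ) * M)) := by
    have : T = (2 : ℝ) ^ (2 * (n : ℝ) - 1) := by
      rw [hT, rpow_sub two_pos, rpow_one]
      rw [show (2 : ℝ) * (n:ℝ) = ((2 * n : ℕ) : ℝ) by push_cast; ring,
        rpow_natCast]
    rw [this, ← rpow_natCast 2 (2*n)] at *
    rw [this, ← rpow_mul (by norm_num : (0:ℝ) ≤ 2), ← rpow_add two_pos]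
    ring_nf
  constructor
  · have h2jpos : (0:ℝ) < 2 ^ j := by positivity
    have hfinal : T ^ (-M) * (2 * K) ≤ 2 ^ M * (2 * K + 1) * (2 : ℝ) ^ (-(2 * (n : ℝ) * M)) := by
      rw [hTid]
      have h2M : (0:ℝ) < (2:ℝ) ^ M := rpow_pos_of_pos two_pos M
      have h2nM : (0:ℝ) < (2:ℝ) ^ (-(2 * (n : ℝ) * M)) := rpow_pos_of_pos two_pos _
      nlinarith
    calc (2 : ℝ) ^ j * ∫ y : ℝ, (1 + 2 ^ j * |x - y|) ^ (-M) *
          (1 + 2 ^ ℓ * |y - 2 ^ (2 * n + ℓ)|) ^ (-(2 * M))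
        ≤ 2 ^ j * (T ^ (-M) * (2 * K)) := by
          exact mul_le_mul_of_nonneg_left hint h2jpos.le
      _ ≤ 2 ^ j * (2 ^ M * (2 * K + 1) * (2 : ℝ) ^ (-(2 * (n : ℝ) * M))) :=
          mul_le_mul_of_nonneg_left hfinal h2jpos.le
      _ = 2 ^ M * (2 * K + 1) * 2 ^ j * (2 : ℝ) ^ (-(2 * (n : ℝ) * M)) := by ring
  · have hC : (0:ℝ) < (2 : ℝ) ^ M * (2 * K + 1) := by positivity
    have e1 : (2:ℝ) ^ j ≤ (2 : ℝ) ^ ((n : ℝ) / 2) := by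
      rw [← rpow_natCast 2 j]
      apply rpow_le_rpow_of_exponent_le one_le_two
      have : (j:ℝ) ≤ ((n/2 : ℕ) : ℝ) := Nat.cast_le.mpr hj2
      have h2 : ((n/2 : ℕ) : ℝ) ≤ (n:ℝ)/2 := by
        rw [le_div_iff₀ (by norm_num)]
        exact_mod_cast Nat.div_mul_le_self n 2
      linarith
    have e2 : (2:ℝ) ^ (-(2 * (n : ℝ) * M)) ≤ (2 : ℝ) ^ (-((n : ℝ) * M)) := by
      apply rpow_le_rpow_of_exponent_le one_le_two
      have : (0:ℝ) ≤ (n:ℝ) * M := by positivity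
      linarith
    have h2j' : (0:ℝ) ≤ (2:ℝ)^j := by positivity
    have h2nM : (0:ℝ) ≤ (2:ℝ) ^ (-(2 * (n : ℝ) * M)) := (rpow_pos_of_pos two_pos _).le
    calc (2 : ℝ) ^ M * (2 * K + 1) * (2:ℝ) ^ j * (2 : ℝ) ^ (-(2 * (n : ℝ) * M))
        ≤ (2 : ℝ) ^ M * (2 * K + 1) * (2 : ℝ) ^ ((n : ℝ) / 2) * (2 : ℝ) ^ (-((n : ℝ) * M)) := by
          apply mul_le_mul (mul_le_mul_of_nonneg_left e1 hC.le) e2 h2nM (by positivity)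
end
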